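/- For every 0 ≤ r < p, every z ∈ ℂ with |z| = 1 and Δ(z) ∈ (−2, 2), and either root Γ of Γ² − Δ(z)·Γ + 1 = 0, at least one of j_{r,Γ}(z) and ĵ_{r,Γ}(z) is nonzero. (Proposition 3.4(ii): at no point of the bands do both boundary-value Jost functions vanish.) -/

import Mathlib

open Polynomial Matrix

/-- `ρ_n = (1 - |α_n|²)^{1/2}`. -/
noncomputable def szRho (α : ℕ → ℂ) (n : ℕ) : ℝ := Real.sqrt (1 - ‖α n‖ ^ 2)

/-- The one-step Szegő transfer matrix `A_k(z)`. -/
noncomputable def SzegoA (α : ℕ → ℂ) (k : ℕ) (z : ℂ) : Matrix (Fin 2) (Fin 2) ℂ :=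
  ((szRho α k : ℂ))⁻¹ • !![z, -(starRingEnd ℂ (α k)); -z * α k, 1]

/-- The transfer matrix `T_n(z) = A_{n-1}(z) ⋯ A_0(z)`. -/
noncomputable def SzegoT (α : ℕ → ℂ) : ℕ → ℂ → Matrix (Fin 2) (Fin 2) ℂ
  | 0, _ => 1
  | n + 1, z => SzegoA α n z * SzegoT α n z

/-- The discriminant `Δ(z) = z^{-p/2} tr T_p(z)` (for `p` even, `z ≠ 0`). -/
noncomputable def SzegoDisc (α : ℕ → ℂ) (p : ℕ) (z : ℂ) : ℂ :=
  (z ^ (p / 2))⁻¹ * (SzegoT α p z).trace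

/-- The matrix `P_Γ(z) = (z^{-p/2} T_p(z) - Γ⁻¹ 1)/(Γ - Γ⁻¹)`. -/
noncomputable def SzegoPGamma (α : ℕ → ℂ) (p : ℕ) (Γ : ℂ) (z : ℂ) :
    Matrix (Fin 2) (Fin 2) ℂ :=
  (Γ - Γ⁻¹)⁻¹ • ((z ^ (p / 2))⁻¹ • SzegoT α p z - Γ⁻¹ • (1 : Matrix (Fin 2) (Fin 2) ℂ))

/-- `a_Γ(z) = ½ (sum of the four entries of P_Γ(z))`. -/
noncomputable def szAΓ (α : ℕ → ℂ) (p : ℕ) (Γ : ℂ) (z : ℂ) : ℂ :=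
  (1 / 2) * (SzegoPGamma α p Γ z 0 0 + SzegoPGamma α p Γ z 0 1 +
    SzegoPGamma α p Γ z 1 0 + SzegoPGamma α p Γ z 1 1)

/-- `b_Γ(z) = ½ ((P_Γ)₁₁ + (P_Γ)₁₂ - (P_Γ)₂₁ - (P_Γ)₂₂)`. -/
noncomputable def szBΓ (α : ℕ → ℂ) (p : ℕ) (Γ : ℂ) (z : ℂ) : ℂ :=
  (1 / 2) * (SzegoPGamma α p Γ z 0 0 + SzegoPGamma α p Γ z 0 1 -
    SzegoPGamma α p Γ z 1 0 - SzegoPGamma α p Γ z 1 1)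

/-! `φ_r(z) = j_{r,Γ}(z) + ĵ_{r,Γ}(z)`, and `φ_r` has no zeros on the unit circle: at each Szegő
step `|z φ_n(z)| = |φ_n(z)| = |φ_n^*(z)| > |α_n| |φ_n^*(z)|` for `|z| = 1`. -/

open ComplexConjugate

lemma szRho_pos {α : ℕ → ℂ} {n : ℕ} (hα : ‖α n‖ < 1) : 0 < szRho α n :=
  Real.sqrt_pos.2 (by nlinarith [norm_nonneg (α n)])

lemma Complex.inv_conj_eq_self {z : ℂ} (hz : ‖z‖ = 1) : (conj z)⁻¹ = z := by
  rw [← map_inv₀, Complex.inv_eq_conj hz, Complex.conj_conj]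

lemma Complex.mul_sub_mul_ne_zero_of_norm_lt {z u w a : ℂ} (hz : ‖z‖ = 1) (hu : u ≠ 0)
    (hw : ‖w‖ = ‖u‖) (ha : ‖a‖ < 1) : z * u - a * w ≠ 0 := by
  intro h
  have hlt : ‖a * w‖ < ‖z * u‖ := by
    rw [norm_mul, norm_mul, hz, one_mul, hw]
    exact mul_lt_of_lt_one_left (norm_pos_iff.2 hu) ha
  rw [sub_eq_zero.1 h] at hlt
  exact hlt.false

lemma aeval_szego_ne_zero_of_norm_eq_one {α : ℕ → ℂ} (hα : ∀ n, ‖α n‖ < 1)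
    {φ φs : ℕ → Polynomial ℂ} (hφ0 : φ 0 = 1)
    (hφrec : ∀ n, φ (n + 1) =
      C ((szRho α n : ℂ))⁻¹ * (X * φ n - C (conj (α n)) * φs n))
    {z : ℂ} (hz : ‖z‖ = 1)
    (hφs : ∀ n, aeval z (φs n) = z ^ n * conj (aeval (conj z)⁻¹ (φ n))) (n : ℕ) :
    aeval z (φ n) ≠ 0 := by
  induction n with
  | zero => simp [hφ0]
  | succ n ih =>
    have hρ : ((szRho α n : ℂ))⁻¹ ≠ 0 := inv_ne_zero (by exact_mod_cast (szRho_pos (hα n)).ne')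
    have hs : ‖aeval z (φs n)‖ = ‖aeval z (φ n)‖ := by
      rw [hφs n, Complex.inv_conj_eq_self hz, norm_mul, norm_pow, hz, one_pow, one_mul,
        Complex.norm_conj]
    rw [hφrec n]
    simp only [map_mul, map_sub, aeval_C, aeval_X, Algebra.algebraMap_self_apply]
    exact mul_ne_zero hρ <| Complex.mul_sub_mul_ne_zero_of_norm_lt hz ih hs <|
      by rw [Complex.norm_conj]; exact hα n

theorem opuc_periodic_jost_not_both_vanish_general
    (p : ℕ)
    (α : ℕ → ℂ)
    (hα : ∀ n, ‖α n‖ < 1)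
    (φ φs ψ : ℕ → Polynomial ℂ)
    (hφ0 : φ 0 = 1)
    (hφrec : ∀ n, φ (n + 1) =
      C ((szRho α n : ℂ))⁻¹ * (X * φ n - C (starRingEnd ℂ (α n)) * φs n))
    (hφs : ∀ n, ∀ z : ℂ, z ≠ 0 →
      aeval z (φs n) = z ^ n * starRingEnd ℂ (aeval ((starRingEnd ℂ z)⁻¹) (φ n)))
    (r : ℕ)
    (z : ℂ) (hz : ‖z‖ = 1)
    (Γ : ℂ) :
    szAΓ α p Γ z * aeval z (φ r) + szBΓ α p Γ z * aeval z (ψ r) ≠ 0 ∨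
      (1 - szAΓ α p Γ z) * aeval z (φ r) - szBΓ α p Γ z * aeval z (ψ r) ≠ 0 := by
  have hz0 : z ≠ 0 := norm_ne_zero_iff.1 (by rw [hz]; exact one_ne_zero)
  have hφr := aeval_szego_ne_zero_of_norm_eq_one hα hφ0 hφrec hz (fun n ↦ hφs n z hz0) r
  by_contra! hboth
  exact hφr (by linear_combination hboth.1 + hboth.2)

/-- **Proposition 3.4(ii).** At no point of the bands do both boundary-value Jost
functions `j_{r,Γ}` and `ĵ_{r,Γ}` vanish. -/
theorem opuc_periodic_jost_not_both_vanish
    (p : ℕ) (hp : 0 < p) (hpeven : Even p)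
    (α : ℕ → ℂ)
    (hα : ∀ n, ‖α n‖ < 1)
    (hper : ∀ n, α (n + p) = α n)
    (φ φs ψ ψs : ℕ → Polynomial ℂ)
    (hφ0 : φ 0 = 1)
    (hφrec : ∀ n, φ (n + 1) =
      C ((szRho α n : ℂ))⁻¹ * (X * φ n - C (starRingEnd ℂ (α n)) * φs n))
    (hφs : ∀ n, ∀ z : ℂ, z ≠ 0 →
      aeval z (φs n) = z ^ n * starRingEnd ℂ (aeval ((starRingEnd ℂ z)⁻¹) (φ n)))
    (hψ0 : ψ 0 = 1)
    (hψrec : ∀ n, ψ (n + 1) =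
      C ((szRho α n : ℂ))⁻¹ * (X * ψ n - C (starRingEnd ℂ (-α n)) * ψs n))
    (hψs : ∀ n, ∀ z : ℂ, z ≠ 0 →
      aeval z (ψs n) = z ^ n * starRingEnd ℂ (aeval ((starRingEnd ℂ z)⁻¹) (ψ n)))
    (r : ℕ) (hr : r < p)
    (z : ℂ) (hz : ‖z‖ = 1)
    (hΔ : ∃ t : ℝ, t ∈ Set.Ioo (-2 : ℝ) 2 ∧ SzegoDisc α p z = (t : ℂ))
    (Γ : ℂ)
    (hΓ : Γ ^ 2 - SzegoDisc α p z * Γ + 1 = 0) :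
    szAΓ α p Γ z * aeval z (φ r) + szBΓ α p Γ z * aeval z (ψ r) ≠ 0 ∨
      (1 - szAΓ α p Γ z) * aeval z (φ r) - szBΓ α p Γ z * aeval z (ψ r) ≠ 0 :=
  opuc_periodic_jost_not_both_vanish_general p α hα φ φs ψ hφ0 hφrec hφs r z hz Γ
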